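/- arXiv:2304.06450 — 2 statements merged into one kernel-verified Lean document; each statement's English description precedes it below -/
import Mathlib

section
/- The composite of strong extensions of partial K-powered fields is strong: if D₀ ◁ D₁ and D₁ ◁ D₂, then D₀ ◁ D₂. -/
/-!
Fix a tuple `z` from `D₂` and let `w` be a tuple spanning `span_ℚ z ∩ D₁` over `ℚ`. Scaling a
basis by integers puts `w` in `span_ℤ z`, so `exp w` lies in the field generated by `exp z`.
Along `D₀ ⊆ D₀ + span w ⊆ D₁` the `ℚ`-linear dimension is additive,
`ldim_ℚ(z/D₀) = ldim_ℚ(w/D₀) + ldim_ℚ(z/D₁)`, while the `K`-linear dimension and the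
transcendence degree are only superadditive. Hence `δ(z/D₀) ≥ δ(w/D₀) + δ(z/D₁) ≥ 0`.
For the transcendence degree, a maximal independent subtuple of `exp w` over `D₀` followed by one
of `exp z` over `D₁` is independent over `D₀` and algebraic over `D₀(exp z)`, so in the
algebraic matroid over `D₀` its length is at most the rank of `exp z`.
-/

open Set Submodule

/-- Relative linear dimension: the dimension of the span of `A ∪ B` modulo the span of `B`. -/
noncomputable def ldim (R : Type*) [DivisionRing R] {V : Type*} [AddCommGroup V] [Module R V]
    (A B : Set V) : ℕ :=
  Module.finrank R (↥(span R (A ∪ B)) ⧸ (span R B).comap (span R (A ∪ B)).subtype)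

/-- Relative transcendence degree of `A` over (the field generated by) `B`. -/
noncomputable def td {F : Type*} [Field F] [CharZero F] (A B : Set F) : ℕ :=
  sSup {n : ℕ | ∃ s : Fin n → F, (∀ i, s i ∈ A) ∧
    AlgebraicIndependent (Algebra.adjoin ℚ B) s}

/-- A partial K-powered field: a ℚ-subspace `D` of a `K`-vector space `V` together with a
partial exponential group homomorphism into `Fˣ`, such that `D` `K`-spans `V` and
`exp(D)` generates `F` as a field. -/
structure PPF (K : Type) [Field K] [CharZero K] where
  V : Type
  F : Type
  [addV : AddCommGroup V]
  [modK : Module K V]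
  [modQ : Module ℚ V]
  [fieldF : Field F]
  [charF : CharZero F]
  D : Submodule ℚ V
  exp : V → F
  exp_ne_zero : ∀ x ∈ D, exp x ≠ 0
  exp_add : ∀ x ∈ D, ∀ y ∈ D, exp (x + y) = exp x * exp y
  spans : span K (D : Set V) = ⊤
  generates : Subfield.closure (exp '' D) = ⊤

attribute [instance] PPF.addV PPF.modK PPF.modQ PPF.fieldF PPF.charF

variable {K : Type} [Field K] [CharZero K]

/-- The predimension δ(A/B) = ldim_K(A/B) + td(exp A / exp B) − ldim_ℚ(A/B). -/
noncomputable def PPF.delta (P : PPF K) (A B : Set P.V) : ℤ :=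
  (ldim K A B : ℤ) + (td (P.exp '' A) (P.exp '' B) : ℤ) - (ldim ℚ A B : ℤ)

/-- A subset is strong in `P` if every finite tuple from the domain `D` has
nonnegative predimension over it. -/
def PPF.StrongIn (P : PPF K) (S : Set P.V) : Prop :=
  ∀ (n : ℕ) (z : Fin n → P.V), (∀ i, z i ∈ P.D) → 0 ≤ P.delta (Set.range z) S

/-- A strong extension `D₀ ◁ D₁` of sub-partial-K-powered fields of `P`:
kernel-preserving, and every finite tuple from `D₁` has nonnegative predimension over `D₀`. -/
def PPF.StrongExt (P : PPF K) (D₀ D₁ : Submodule ℚ P.V) : Prop :=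
  D₀ ≤ D₁ ∧ D₁ ≤ P.D ∧ (∀ x ∈ D₁, P.exp x = 1 → x ∈ D₀) ∧
    ∀ (n : ℕ) (z : Fin n → P.V), (∀ i, z i ∈ D₁) → 0 ≤ P.delta (Set.range z) (D₀ : Set P.V)

/-- The K-powers closure of `A` inside the sub-powered-field `E` of `P`. -/
def PPF.pclIn (P : PPF K) (E : Submodule ℚ P.V) (A : Set P.V) : Submodule ℚ P.V :=
  sInf {S | A ⊆ S ∧ S ≤ E ∧ ∀ (n : ℕ) (z : Fin n → P.V), (∀ i, z i ∈ E) →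
      P.delta (Set.range z) (S : Set P.V) ≤ 0 → ∀ i, z i ∈ S}

/-- Powers-transcendence degree of `A` over `B`, computed in the sub-powered-field `E` of `P`:
the least size of a tuple from `E` whose adjunction to `B` captures `A` in the closure. -/
noncomputable def PPF.ktdIn (P : PPF K) (E : Submodule ℚ P.V) (A B : Set P.V) : ℕ :=
  sInf {m | ∃ s : Fin m → P.V, (∀ i, s i ∈ E) ∧ A ⊆ P.pclIn E (B ∪ Set.range s)}

/-- `S` is a purely powers-transcendental extension of `D₀` inside `P`: every finite tuple
from `S` not entirely contained in `D₀` has strictly positive predimension over `D₀`. -/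
def PPF.PPT (P : PPF K) (D₀ S : Submodule ℚ P.V) : Prop :=
  D₀ ≤ S ∧ ∀ (n : ℕ) (z : Fin n → P.V), (∀ i, z i ∈ S) → (∃ i, z i ∉ D₀) →
    0 < P.delta (Set.range z) (D₀ : Set P.V)

/-- The subfield of `F` generated by the exponentials of `S`. -/
def PPF.fieldOf (P : PPF K) (S : Submodule ℚ P.V) : Subfield P.F :=
  Subfield.closure (P.exp '' S)

/-- The sub-powered-field `S` of `P` is full: exp maps `S` onto the nonzero elements of its
field, and its field is (relatively) algebraically closed. -/
def PPF.FullSub (P : PPF K) (S : Submodule ℚ P.V) : Prop :=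
  S ≤ P.D ∧ (∀ y ∈ P.fieldOf S, y ≠ 0 → ∃ x ∈ S, P.exp x = y) ∧
    ∀ y : P.F, (∃ p : Polynomial P.F, p ≠ 0 ∧ (∀ i, p.coeff i ∈ P.fieldOf S) ∧
      Polynomial.eval y p = 0) → y ∈ P.fieldOf S

/-- `(eV, eF)` is an isomorphism, over the base `D₀`, between the sub-partial-K-powered fields
of `P` generated by `D₂` and `D₃`: `eV` is a `K`-linear bijection of the vector-space parts
mapping `D₂` onto `D₃` and fixing `D₀`, `eF` is a field isomorphism of the field parts fixing
the field of `D₀`, and the pair commutes with exp. -/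
def PPF.IsIsoOver (P : PPF K) (D₂ D₃ D₀ : Submodule ℚ P.V)
    (eV : P.V → P.V) (eF : P.F → P.F) : Prop :=
  Set.BijOn eV (span K (D₂ : Set P.V) : Set P.V) (span K (D₃ : Set P.V)) ∧
  Set.BijOn eV (D₂ : Set P.V) (D₃ : Set P.V) ∧
  (∀ x y : P.V, x ∈ span K (D₂ : Set P.V) → y ∈ span K (D₂ : Set P.V) →
    eV (x + y) = eV x + eV y) ∧
  (∀ (c : K) (x : P.V), x ∈ span K (D₂ : Set P.V) → eV (c • x) = c • eV x) ∧
  (∀ x ∈ D₀, eV x = x) ∧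
  Set.BijOn eF (P.fieldOf D₂ : Set P.F) (P.fieldOf D₃ : Set P.F) ∧
  (∀ x y : P.F, x ∈ P.fieldOf D₂ → y ∈ P.fieldOf D₂ → eF (x + y) = eF x + eF y) ∧
  (∀ x y : P.F, x ∈ P.fieldOf D₂ → y ∈ P.fieldOf D₂ → eF (x * y) = eF x * eF y) ∧
  (∀ x ∈ D₀, eF (P.exp x) = P.exp x) ∧
  (∀ x ∈ D₂, eF (P.exp x) = P.exp (eV x))


section AlgebraicMatroid

open AlgebraicIndependent

variable {R A : Type*} [CommRing R] [CommRing A] [IsDomain A] [Algebra R A] [FaithfulSMul R A]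

theorem AlgebraicIndependent.card_le_eRk_of_isAlgebraic {ι : Type*} {v : ι → A}
    (hv : AlgebraicIndependent R v) {S : Set A}
    (halg : ∀ i, IsAlgebraic (Algebra.adjoin R S) (v i)) :
    ENat.card ι ≤ (matroid R A).eRk S := by
  have : Nontrivial R := (algebraMap R A).domain_nontrivial
  have hind : (matroid R A).Indep (range v) := matroid_indep_iff.2 hv.to_subtype_range
  have hsub : range v ⊆ (matroid R A).closure S := by
    rintro _ ⟨i, rfl⟩
    rw [matroid_closure_eq]
    exact halg i
  calc ENat.card ι = (range v).encard := by
        rw [← Set.encard_univ, ← Set.image_univ, hv.injective.encard_image]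
    _ ≤ (matroid R A).eRk ((matroid R A).closure S) := hind.encard_le_eRk_of_subset hsub
    _ = (matroid R A).eRk S := Matroid.eRk_closure_eq _ _

end AlgebraicMatroid

theorem AlgebraicIndependent.of_toSubring_le {F ι R₁ R₂ : Type*} [CommRing F] [CommRing R₁]
    [CommRing R₂] [Algebra R₁ F] [Algebra R₂ F] {S₁ : Subalgebra R₁ F} {S₂ : Subalgebra R₂ F}
    (h : S₁.toSubring ≤ S₂.toSubring) {v : ι → F} (hv : AlgebraicIndependent S₂ v) :
    AlgebraicIndependent S₁ v :=
  hv.of_ringHom_of_comp_eq (Subring.inclusion h) (RingHom.id F) (Subring.inclusion_injective h) rfl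

theorem Subalgebra.isAlgebraic_of_mem_subfieldClosure {R F : Type*} [CommRing R] [Field F]
    [Algebra R F] (T : Subalgebra R F) {x : F} (hx : x ∈ Subfield.closure (T : Set F)) :
    IsAlgebraic T x := by
  let L : Subfield F :=
    { (Subalgebra.algebraicClosure T F).toSubring with inv_mem' := fun _ hy => hy.inv }
  exact Subfield.closure_le (t := L) |>.2 (fun y hy => isAlgebraic_algebraMap (⟨y, hy⟩ : T)) hx

section TranscendenceDegree

open AlgebraicIndependent

variable {F : Type*} [Field F] [CharZero F] {A B : Set F}

theorem td_set_bddAbove (hA : A.Finite) :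
    BddAbove {n : ℕ | ∃ s : Fin n → F, (∀ i, s i ∈ A) ∧
      AlgebraicIndependent (Algebra.adjoin ℚ B) s} := by
  refine ⟨A.ncard, fun n ⟨s, hsA, hs⟩ => ?_⟩
  have := (hs.card_le_eRk_of_isAlgebraic (S := A) fun i =>
    isAlgebraic_algebraMap (⟨s i, Algebra.subset_adjoin (hsA i)⟩ :
      Algebra.adjoin (Algebra.adjoin ℚ B) A)).trans (Matroid.eRk_le_encard _ A)
  rw [ENat.card_eq_coe_fintype_card, Fintype.card_fin, ← hA.cast_ncard_eq] at this
  exact_mod_cast this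

theorem le_td (hA : A.Finite) {n : ℕ} {s : Fin n → F} (hsA : ∀ i, s i ∈ A)
    (hs : AlgebraicIndependent (Algebra.adjoin ℚ B) s) : n ≤ td A B :=
  le_csSup (td_set_bddAbove hA) ⟨s, hsA, hs⟩

theorem exists_algebraicIndependent_fin_td (hA : A.Finite) :
    ∃ s : Fin (td A B) → F, (∀ i, s i ∈ A) ∧ AlgebraicIndependent (Algebra.adjoin ℚ B) s :=
  Nat.sSup_mem (s := {n : ℕ | ∃ s : Fin n → F, (∀ i, s i ∈ A) ∧
      AlgebraicIndependent (Algebra.adjoin ℚ B) s})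
    ⟨0, finZeroElim, finZeroElim,
      algebraicIndependent_empty_type_iff.2 (FaithfulSMul.algebraMap_injective _ F)⟩
    (td_set_bddAbove hA)

theorem eRk_le_td (hA : A.Finite) :
    (matroid (Algebra.adjoin ℚ B) F).eRk A ≤ td A B := by
  obtain ⟨I, hI⟩ := (matroid (Algebra.adjoin ℚ B) F).exists_isBasis A
  have hIfin : I.Finite := hA.subset hI.subset
  have := hIfin.fintype
  let e := (Fintype.equivFin I).symm
  rw [← hI.encard_eq_eRk, Set.encard_eq_coe_toFinset_card, Set.toFinset_card]
  exact_mod_cast le_td hA (s := Subtype.val ∘ e) (fun i => hI.subset (e i).2)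
    ((matroid_indep_iff.1 hI.indep).comp _ e.injective)

theorem card_le_td_of_isAlgebraic {ι : Type*} [Fintype ι] {v : ι → F}
    (hv : AlgebraicIndependent (Algebra.adjoin ℚ B) v) (hA : A.Finite)
    (halg : ∀ i, IsAlgebraic (Algebra.adjoin (Algebra.adjoin ℚ B) A) (v i)) :
    Fintype.card ι ≤ td A B := by
  have := (hv.card_le_eRk_of_isAlgebraic halg).trans (eRk_le_td hA)
  rwa [ENat.card_eq_coe_fintype_card, Nat.cast_le] at this

theorem td_add_td_le {E₀ E₁ Aw Az : Set F} (hAw : Aw.Finite) (hAz : Az.Finite)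
    (hE : E₀ ⊆ E₁) (hAwE₁ : Aw ⊆ E₁) (hAw_closure : Aw ⊆ Subfield.closure (E₀ ∪ Az)) :
    td Aw E₀ + td Az E₁ ≤ td Az E₀ := by
  obtain ⟨s, hsAw, hs⟩ := exists_algebraicIndependent_fin_td (B := E₀) hAw
  obtain ⟨u, huAz, hu⟩ := exists_algebraicIndependent_fin_td (B := E₁) hAz
  set R₀ := Algebra.adjoin ℚ E₀
  have hle : (Algebra.adjoin R₀ (range s)).toSubring ≤ (Algebra.adjoin ℚ E₁).toSubring := by
    rw [Algebra.adjoin_eq_ring_closure, Subring.closure_le]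
    rintro _ (⟨r, rfl⟩ | ⟨i, rfl⟩)
    · exact Algebra.adjoin_mono hE r.2
    · exact Algebra.subset_adjoin (hAwE₁ (hsAw i))
  have hsu := hs.sumElim (hu.of_toSubring_le hle)
  have hclosure :
      Subfield.closure (E₀ ∪ Az) ≤ Subfield.closure (Algebra.adjoin R₀ Az : Set F) := by
    refine Subfield.closure_mono ?_
    rintro x (hx | hx)
    · exact Subalgebra.algebraMap_mem _ (⟨x, Algebra.subset_adjoin hx⟩ : R₀)
    · exact Algebra.subset_adjoin hx
  have := card_le_td_of_isAlgebraic hsu hAz <| by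
    rintro (j | j)
    · exact isAlgebraic_algebraMap (⟨u j, Algebra.subset_adjoin (huAz j)⟩ : Algebra.adjoin R₀ Az)
    · exact Subalgebra.isAlgebraic_of_mem_subfieldClosure _ (hclosure (hAw_closure (hsAw j)))
  simpa [add_comm] using this

end TranscendenceDegree

section LinearDimension

variable {R V : Type*} [DivisionRing R] [AddCommGroup V] [Module R V]

theorem ldim_add_finrank_inf {A : Set V} (hA : A.Finite) (B : Set V) :
    ldim R A B + Module.finrank R ↥(span R A ⊓ span R B) = Module.finrank R (span R A) := by
  have : FiniteDimensional R (span R A) := FiniteDimensional.span_of_finite R hA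
  have hquot := (LinearMap.quotientInfEquivSupQuotient (span R A) (span R B)).finrank_eq
  rw [← span_union] at hquot
  rw [ldim, ← hquot,
    ← (comapSubtypeEquivOfLe (inf_le_left : span R A ⊓ span R B ≤ _)).finrank_eq, ← comap_inf,
    Submodule.finrank_quotient_add_finrank]

theorem ldim_add_ldim_eq {A W B C : Set V} (hA : A.Finite) (hW : W.Finite)
    (hBC : span R B ≤ span R C) (hW_span : span R W = span R A ⊓ span R C) :
    ldim R W B + ldim R A C = ldim R A B := by
  have hWB : span R W ⊓ span R B = span R A ⊓ span R B := by
    rw [hW_span, inf_assoc, inf_eq_right.2 hBC]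
  have hWB' := ldim_add_finrank_inf (R := R) hW B
  have hAC := ldim_add_finrank_inf (R := R) hA C
  have hAB := ldim_add_finrank_inf (R := R) hA B
  rw [hWB, hW_span] at hWB'
  omega

theorem ldim_add_ldim_le {A W B C : Set V} (hA : A.Finite) (hW : W.Finite)
    (hBC : span R B ≤ span R C) (hW_span : span R W ≤ span R A ⊓ span R C) :
    ldim R W B + ldim R A C ≤ ldim R A B := by
  have : FiniteDimensional R (span R A) := FiniteDimensional.span_of_finite R hA
  have : FiniteDimensional R (span R W) := FiniteDimensional.span_of_finite R hW
  have hsup : span R W ⊔ (span R A ⊓ span R B) ≤ span R A ⊓ span R C :=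
    sup_le hW_span (inf_le_inf_left _ hBC)
  have hinf : span R W ⊓ (span R A ⊓ span R B) = span R W ⊓ span R B := by
    rw [← inf_assoc, inf_eq_left.2 (hW_span.trans inf_le_left)]
  have hgrass := Submodule.finrank_sup_add_finrank_inf_eq (span R W) (span R A ⊓ span R B)
  have hmono := Submodule.finrank_mono hsup
  have hWB := ldim_add_finrank_inf (R := R) hW B
  have hAC := ldim_add_finrank_inf (R := R) hA C
  have hAB := ldim_add_finrank_inf (R := R) hA B
  rw [hinf] at hgrass
  omega

end LinearDimension

theorem Submodule.exists_fin_family_mem_span_int_of_le_span_rat {V : Type*} [AddCommGroup V]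
    [Module ℚ V] {S : Set V} {U : Submodule ℚ V} [FiniteDimensional ℚ U] (hU : U ≤ span ℚ S) :
    ∃ (d : ℕ) (w : Fin d → V), (∀ j, w j ∈ U) ∧ (∀ j, w j ∈ span ℤ S) ∧
      span ℚ (range w) = U := by
  let b := Module.finBasis ℚ U
  have hmul : ∀ j, ∃ t : ℤ, t ≠ 0 ∧ (t : ℚ) • (b j : V) ∈ span ℤ S := fun j => by
    obtain ⟨⟨t, ht⟩, hts⟩ :=
      multiple_mem_span_of_mem_localization_span (nonZeroDivisors ℤ) ℚ S _ (hU (b j).2)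
    exact ⟨t, nonZeroDivisors.ne_zero ht, by rwa [Int.cast_smul_eq_zsmul]⟩
  choose t ht0 ht using hmul
  refine ⟨_, fun j => (t j : ℚ) • (b j : V), fun j => U.smul_mem _ (b j).2, ht,
    le_antisymm (span_le.2 (range_subset_iff.2 fun j => U.smul_mem _ (b j).2)) ?_⟩
  calc U = (⊤ : Submodule ℚ U).map U.subtype := (map_subtype_top U).symm
    _ = span ℚ (range fun j => (b j : V)) := by rw [← b.span_eq, map_span, ← range_comp]; rfl
    _ ≤ _ := span_le.2 <| range_subset_iff.2 fun j => by
      rw [← inv_smul_smul₀ (Int.cast_ne_zero.2 (ht0 j) : (t j : ℚ) ≠ 0) (b j : V)]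
      exact smul_mem _ _ (subset_span ⟨j, rfl⟩)

namespace PPF

variable (P : PPF K)

theorem exp_zero : P.exp 0 = 1 := by
  have h := P.exp_add 0 (zero_mem P.D) 0 (zero_mem P.D)
  rw [add_zero] at h
  exact (mul_eq_left₀ (P.exp_ne_zero 0 (zero_mem P.D))).1 h.symm

theorem exp_neg {x : P.V} (hx : x ∈ P.D) : P.exp (-x) = (P.exp x)⁻¹ := by
  have h := P.exp_add x hx (-x) (neg_mem hx)
  rw [add_neg_cancel, exp_zero] at h
  exact eq_inv_of_mul_eq_one_right h.symm

theorem exp_mem_subfieldClosure_of_mem_span_int {S : Set P.V} (hS : S ⊆ P.D) {x : P.V}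
    (hx : x ∈ span ℤ S) : P.exp x ∈ Subfield.closure (P.exp '' S) := by
  rw [← mem_toAddSubgroup, span_int_eq_addSubgroupClosure] at hx
  have hD : ∀ y ∈ AddSubgroup.closure S, y ∈ P.D := fun y hy =>
    (AddSubgroup.closure_le P.D.toAddSubgroup).2 hS hy
  induction hx using AddSubgroup.closure_induction with
  | mem y hy => exact Subfield.subset_closure (mem_image_of_mem _ hy)
  | zero => exact P.exp_zero ▸ one_mem _
  | add y y' hy hy' h h' => exact P.exp_add y (hD y hy) y' (hD y' hy') ▸ mul_mem h h'
  | neg y hy h => exact (P.exp_neg (hD y hy)).symm ▸ inv_mem h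

theorem delta_add_delta_le {D₀ D₁ : Submodule ℚ P.V} (h01 : D₀ ≤ D₁) {n d : ℕ}
    {z : Fin n → P.V} (hz : ∀ i, z i ∈ P.D) {w : Fin d → P.V}
    (hw_int : ∀ j, w j ∈ span ℤ (range z)) (hw_span : span ℚ (range w) = span ℚ (range z) ⊓ D₁) :
    P.delta (range w) D₀ + P.delta (range z) D₁ ≤ P.delta (range z) D₀ := by
  have hw : ∀ j, w j ∈ span ℚ (range z) ⊓ D₁ := fun j => hw_span ▸ subset_span ⟨j, rfl⟩
  have hQ : ldim ℚ (range w) D₀ + ldim ℚ (range z) D₁ = ldim ℚ (range z) D₀ :=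
    ldim_add_ldim_eq (finite_range z) (finite_range w) (span_mono h01)
      (by rwa [span_eq D₁])
  have hK : ldim K (range w) D₀ + ldim K (range z) D₁ ≤ ldim K (range z) D₀ :=
    ldim_add_ldim_le (finite_range z) (finite_range w) (span_mono h01) <|
      span_le.2 <| range_subset_iff.2 fun j =>
        ⟨span_le_restrictScalars ℚ K _ (hw j).1, subset_span (hw j).2⟩
  have htd : td (P.exp '' range w) (P.exp '' D₀) + td (P.exp '' range z) (P.exp '' D₁) ≤
      td (P.exp '' range z) (P.exp '' D₀) := by
    refine td_add_td_le ((finite_range w).image _) ((finite_range z).image _) (image_mono h01)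
      (image_mono (range_subset_iff.2 fun j => (hw j).2)) ?_
    rintro _ ⟨_, ⟨j, rfl⟩, rfl⟩
    exact Subfield.closure_mono subset_union_right
      (P.exp_mem_subfieldClosure_of_mem_span_int (range_subset_iff.2 hz) (hw_int j))
  unfold delta
  omega

end PPF

/-- The composite of strong extensions of partial K-powered fields is strong:
if D₀ ◁ D₁ and D₁ ◁ D₂ then D₀ ◁ D₂. -/
theorem strongExt_trans (P : PPF K) (D₀ D₁ D₂ : Submodule ℚ P.V)
    (h01 : P.StrongExt D₀ D₁) (h12 : P.StrongExt D₁ D₂) :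
    P.StrongExt D₀ D₂ := by
  obtain ⟨h01_le, -, h01_ker, h01_delta⟩ := h01
  obtain ⟨h12_le, h12_D, h12_ker, h12_delta⟩ := h12
  refine ⟨h01_le.trans h12_le, h12_D, fun x hx h1 => h01_ker x (h12_ker x hx h1) h1,
    fun n z hz => ?_⟩
  have : FiniteDimensional ℚ (span ℚ (range z)) := .span_of_finite ℚ (finite_range z)
  have : FiniteDimensional ℚ ↥(span ℚ (range z) ⊓ D₁) := finiteDimensional_of_le inf_le_left
  obtain ⟨d, w, hw, hw_int, hw_span⟩ :=
    Submodule.exists_fin_family_mem_span_int_of_le_span_rat (S := range z)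
      (inf_le_left : span ℚ (range z) ⊓ D₁ ≤ _)
  have := P.delta_add_delta_le h01_le (fun i => h12_D (hz i)) hw_int hw_span
  linarith [h01_delta d w fun j => (hw j).2, h12_delta n z hz]
end

section
/- (Ziegler's lemma, vector space version) Let K be a field, V a K-vector space, V' ≤ V a subspace, and v₁, v₂, v₃ ∈ Vⁿ with v₁ + v₂ + v₃ = 0. Suppose that for all i ≠ j in {1,2,3}, ldim_K(v_i / V' ∪ v_j) = ldim_K(v_i / V'). Then there is a K-linear subspace L ≤ Vⁿ such that each v_i is a generic point of a V'-coset of L; in particular ldim_K(v_i / V') = dim L for i = 1, 2, 3. -/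
open Set Submodule

variable {K : Type} [Field K] [CharZero K]

/-!
The relation module `{a ∈ Kⁿ | ∑ aₗ vₗ ∈ V'}` of a tuple determines its dimension over `V'`, by
rank–nullity. The hypothesis says that adjoining `vₖ` to `V'` creates no new relations for `vᵢ`.
If `a` is a relation of `vⱼ`, then `v₁ + v₂ + v₃ = 0` makes it a relation of `vᵢ` modulo
`V' + ⟨vₖ⟩`, hence modulo `V'`; so all three tuples have the same relation module `R`.
A matrix `M` whose rows form a basis of `R` cuts out `L`, and a right inverse of `M` produces the
coset representatives in `V'`.
-/

open Module

variable {𝕜 V : Type*} [Field 𝕜] [AddCommGroup V] [Module 𝕜 V] {ι : Type*} [Fintype ι]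

def relationsModulo (B : Submodule 𝕜 V) (v : ι → V) : Submodule 𝕜 (ι → 𝕜) :=
  LinearMap.ker (B.mkQ ∘ₗ Fintype.linearCombination 𝕜 v)

theorem mem_relationsModulo {B : Submodule 𝕜 V} {v : ι → V} {a : ι → 𝕜} :
    a ∈ relationsModulo B v ↔ ∑ j, a j • v j ∈ B := by
  rw [relationsModulo, LinearMap.mem_ker, LinearMap.comp_apply, mkQ_apply, Quotient.mk_eq_zero,
    Fintype.linearCombination_apply]

theorem relationsModulo_mono {B C : Submodule 𝕜 V} (h : B ≤ C) (v : ι → V) :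
    relationsModulo B v ≤ relationsModulo C v := fun _ ha =>
  mem_relationsModulo.2 (h (mem_relationsModulo.1 ha))

theorem ldim_eq_finrank_map_mkQ (A B : Set V) :
    ldim 𝕜 A B = finrank 𝕜 ((span 𝕜 A).map (span 𝕜 B).mkQ) := by
  let f := (span 𝕜 B).mkQ ∘ₗ (span 𝕜 (A ∪ B)).subtype
  have hker : LinearMap.ker f = (span 𝕜 B).comap (span 𝕜 (A ∪ B)).subtype := by
    ext x
    simp [f, Submodule.Quotient.mk_eq_zero]
  have hrange : LinearMap.range f = (span 𝕜 A).map (span 𝕜 B).mkQ := by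
    rw [LinearMap.range_comp, range_subtype, span_union, Submodule.map_sup,
      mkQ_map_self, sup_bot_eq]
  rw [ldim, ← hker, ← hrange]
  exact f.quotKerEquivRange.finrank_eq

theorem ldim_add_finrank_relationsModulo (B : Set V) (v : ι → V) :
    ldim 𝕜 (Set.range v) B + finrank 𝕜 (relationsModulo (span 𝕜 B) v) = Fintype.card ι := by
  have hrange : LinearMap.range ((span 𝕜 B).mkQ ∘ₗ Fintype.linearCombination 𝕜 v) =
      (span 𝕜 (Set.range v)).map (span 𝕜 B).mkQ := by
    rw [LinearMap.range_comp, Fintype.range_linearCombination]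
  rw [ldim_eq_finrank_map_mkQ, ← hrange, relationsModulo, LinearMap.finrank_range_add_finrank_ker,
    Module.finrank_fintype_fun_eq_card]

theorem relationsModulo_span_union_eq {B C : Set V} {v : ι → V}
    (h : ldim 𝕜 (Set.range v) (B ∪ C) = ldim 𝕜 (Set.range v) B) :
    relationsModulo (span 𝕜 (B ∪ C)) v = relationsModulo (span 𝕜 B) v := by
  have hB := ldim_add_finrank_relationsModulo (𝕜 := 𝕜) B v
  have hBC := ldim_add_finrank_relationsModulo (𝕜 := 𝕜) (B ∪ C) v
  exact (Submodule.eq_of_le_of_finrank_eq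
    (relationsModulo_mono (span_mono Set.subset_union_left) v) (by omega)).symm

theorem relationsModulo_le_of_add_add_eq_zero (B : Submodule 𝕜 V) {u v w : ι → V}
    (hsum : ∀ j, u j + v j + w j = 0)
    (h : ldim 𝕜 (Set.range u) ((B : Set V) ∪ Set.range w) = ldim 𝕜 (Set.range u) B) :
    relationsModulo B v ≤ relationsModulo B u := by
  intro a ha
  have hzero : ∑ j, a j • u j + ∑ j, a j • v j + ∑ j, a j • w j = 0 := by
    simp only [← Finset.sum_add_distrib, ← smul_add, hsum, smul_zero, Finset.sum_const_zero]
  have hv : ∑ j, a j • v j ∈ span 𝕜 ((B : Set V) ∪ Set.range w) :=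
    subset_span (Or.inl (mem_relationsModulo.1 ha))
  have hw : ∑ j, a j • w j ∈ span 𝕜 ((B : Set V) ∪ Set.range w) :=
    sum_mem fun j _ => smul_mem _ _ (subset_span (Or.inr ⟨j, rfl⟩))
  rw [← span_eq B, ← relationsModulo_span_union_eq h, mem_relationsModulo,
    eq_sub_of_add_eq (eq_neg_of_add_eq_zero_left hzero)]
  exact sub_mem (neg_mem hw) hv

namespace Matrix

variable {m n : Type*} [Fintype m] [Fintype n]

def mulTuple (M : Matrix m n 𝕜) (x : n → V) : m → V := fun i => ∑ j, M i j • x j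

theorem mulTuple_mulTuple {l : Type*} [Fintype l] (M : Matrix l m 𝕜) (N : Matrix m n 𝕜)
    (x : n → V) : M.mulTuple (N.mulTuple x) = (M * N).mulTuple x := by
  funext i
  simp only [mulTuple, mul_apply, Finset.smul_sum, Finset.sum_smul, smul_smul]
  exact Finset.sum_comm

theorem one_mulTuple [DecidableEq m] (x : m → V) : (1 : Matrix m m 𝕜).mulTuple x = x := by
  funext i
  simp [mulTuple, one_apply]

theorem exists_mul_eq_one_of_rank_eq_card [DecidableEq m] [DecidableEq n] {M : Matrix m n 𝕜}
    (h : M.rank = Fintype.card m) : ∃ N : Matrix n m 𝕜, M * N = 1 := by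
  have hsurj : Function.Surjective M.mulVecLin := LinearMap.range_eq_top.1 <|
    Submodule.eq_top_of_finrank_eq (by rw [finrank_fintype_fun_eq_card]; exact h)
  obtain ⟨g, hg⟩ := M.mulVecLin.exists_rightInverse_of_surjective (LinearMap.range_eq_top.2 hsurj)
  refine ⟨LinearMap.toMatrix' g, toLin'.injective ?_⟩
  rw [toLin'_mul, toLin'_toMatrix', toLin'_one, ← hg]
  rfl

end Matrix

theorem exists_matrix_rows_mem_rank_eq_finrank {n : Type*} [Fintype n] (R : Submodule 𝕜 (n → 𝕜)) :
    ∃ M : Matrix (Fin (finrank 𝕜 R)) n 𝕜, (∀ i, M i ∈ R) ∧ M.rank = finrank 𝕜 R := by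
  let b := Module.finBasis 𝕜 R
  let M : Matrix (Fin (finrank 𝕜 R)) n 𝕜 := Matrix.of fun i => b i
  have hrows : LinearIndependent 𝕜 M.row := b.linearIndependent.map' R.subtype R.ker_subtype
  exact ⟨M, fun i => (b i).2, by rw [hrows.rank_matrix, Fintype.card_fin]⟩

/-- **Ziegler's lemma, vector space version.**  If v₁ + v₂ + v₃ = 0 in Vⁿ and each vᵢ is
linearly independent from vⱼ over V' (i ≠ j), then there is a K-linear subspace L of Vⁿ
(cut out by a matrix M over K) such that each vᵢ is a generic point of a V'-coset of L;
in particular ldim_K(vᵢ/V') = dim L = n − rk M for each i. -/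
theorem ziegler_vector_space {Kf : Type} [Field Kf] {V : Type} [AddCommGroup V] [Module Kf V]
    (V' : Submodule Kf V) (n : ℕ) (v : Fin 3 → Fin n → V)
    (hsum : ∀ j, v 0 j + v 1 j + v 2 j = 0)
    (hind : ∀ t t' : Fin 3, t ≠ t' →
      ldim Kf (Set.range (v t)) ((V' : Set V) ∪ Set.range (v t')) =
        ldim Kf (Set.range (v t)) (V' : Set V)) :
    ∃ (k : ℕ) (M : Matrix (Fin k) (Fin n) Kf) (c : Fin 3 → Fin n → V),
      (∀ t j, c t j ∈ V') ∧
      (∀ t i, ∑ j, M i j • v t j = ∑ j, M i j • c t j) ∧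
      (∀ t, ldim Kf (Set.range (v t)) (V' : Set V) = n - M.rank) := by
  set R := relationsModulo V' (v 0)
  have h10 := relationsModulo_le_of_add_add_eq_zero V' hsum (hind 0 2 (by decide))
  have h21 := relationsModulo_le_of_add_add_eq_zero V' (u := v 1) (v := v 2) (w := v 0)
    (fun j => by rw [← hsum j]; abel) (hind 1 0 (by decide))
  have h02 := relationsModulo_le_of_add_add_eq_zero V' (u := v 2) (v := v 0) (w := v 1)
    (fun j => by rw [← hsum j]; abel) (hind 2 1 (by decide))
  have hR : ∀ t, relationsModulo V' (v t) = R := by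
    intro t
    fin_cases t
    exacts [rfl, le_antisymm h10 (h02.trans h21), le_antisymm (h21.trans h10) h02]
  obtain ⟨M, hMR, hrank⟩ := exists_matrix_rows_mem_rank_eq_finrank R
  obtain ⟨N, hMN⟩ :=
    Matrix.exists_mul_eq_one_of_rank_eq_card (hrank.trans (Fintype.card_fin _).symm)
  refine ⟨_, M, fun t => N.mulTuple (M.mulTuple (v t)), fun t j => ?_, fun t i => ?_, fun t => ?_⟩
  · have hrel : ∀ i, M.mulTuple (v t) i ∈ V' := fun i =>
      mem_relationsModulo.1 ((hR t).symm ▸ hMR i)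
    exact sum_mem fun i _ => smul_mem _ _ (hrel i)
  · change M.mulTuple (v t) i = M.mulTuple (N.mulTuple (M.mulTuple (v t))) i
    rw [Matrix.mulTuple_mulTuple, hMN, Matrix.one_mulTuple]
  · have hdim := ldim_add_finrank_relationsModulo (𝕜 := Kf) (V' : Set V) (v t)
    rw [span_eq, hR t, Fintype.card_fin] at hdim
    omega
end
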